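/- (Theorem 2, part of.) The pointwise supremum q(y) := sup_{n ∈ ℕ₀} q_n(y) (which is finite since 0 ≤ q_n(y) ≤ h(y) for all n) satisfies q ≤ h pointwise and A q ≥ q pointwise; that is, q belongs to Q = { f : f ≤ h pointwise and A f ≥ f pointwise }. -/

import Mathlib

/-!
The iterates `q_n` stay below `h` because `max(g, 0) ≤ h` and `D h = max (c h) g ≤ h`, so the
monotone operator `D` maps the order interval below `h` into itself. For `A q ≥ q` it suffices to
bound each `q_n` by `A q`: `q_0 = max(g, 0)` is below it since `g ≤ A g ≤ A q`, and
`q_{n+1} = D q_n ≤ D q = max (c A q) g ≤ A q`.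
-/
open Finset

/-- The weighted arithmetic average operator:
`(A f)(y) = ∑ k, α k * f (y - x k)`. -/
noncomputable def avgOp (d m : ℕ) (α : Fin m → ℝ) (x : Fin m → (Fin d → ℝ))
    (f : (Fin d → ℝ) → ℝ) : (Fin d → ℝ) → ℝ :=
  fun y => ∑ k, α k * f (y - x k)

/-- The Bermudan iteration operator: `(D f)(y) = max (c * (A f)(y)) (g y)`. -/
noncomputable def bermOp (d m : ℕ) (α : Fin m → ℝ) (x : Fin m → (Fin d → ℝ))
    (c : ℝ) (g : (Fin d → ℝ) → ℝ) (f : (Fin d → ℝ) → ℝ) : (Fin d → ℝ) → ℝ :=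
  fun y => max (c * avgOp d m α x f y) (g y)

section

variable {d m : ℕ} {α : Fin m → ℝ} {x : Fin m → (Fin d → ℝ)} {c : ℝ}
  {g f f' u : (Fin d → ℝ) → ℝ}

theorem avgOp_mono (hα : ∀ k, 0 ≤ α k) (hff' : f ≤ f') : avgOp d m α x f ≤ avgOp d m α x f' :=
  fun _ => sum_le_sum fun k _ => mul_le_mul_of_nonneg_left (hff' _) (hα k)

theorem avgOp_nonneg (hα : ∀ k, 0 ≤ α k) (hf : 0 ≤ f) : 0 ≤ avgOp d m α x f :=
  fun _ => sum_nonneg fun k _ => mul_nonneg (hα k) (hf _)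

theorem bermOp_mono (hα : ∀ k, 0 ≤ α k) (hc : 0 ≤ c) : Monotone (bermOp d m α x c g) :=
  fun _ _ hff' y => max_le_max_right _ (mul_le_mul_of_nonneg_left (avgOp_mono hα hff' y) hc)

theorem bermOp_le_of_avgOp_le (hc₀ : 0 ≤ c) (hc₁ : c ≤ 1) (hu : 0 ≤ u) (hgu : g ≤ u)
    (hfu : avgOp d m α x f ≤ u) : bermOp d m α x c g f ≤ u := fun y =>
  max_le ((mul_le_mul_of_nonneg_left (hfu y) hc₀).trans (mul_le_of_le_one_left (hu y) hc₁))
    (hgu y)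

theorem mapsTo_bermOp_Iic (hα : ∀ k, 0 ≤ α k) (hc₀ : 0 ≤ c) (hc₁ : c ≤ 1) (hu : 0 ≤ u)
    (hgu : g ≤ u) (hAu : avgOp d m α x u ≤ u) :
    Set.MapsTo (bermOp d m α x c g) (Set.Iic u) (Set.Iic u) := fun _ hf =>
  (bermOp_mono hα hc₀ hf).trans (bermOp_le_of_avgOp_le hc₀ hc₁ hu hgu hAu)

end

theorem qsup_mem_Q_general (d m : ℕ)
    (α : Fin m → ℝ) (hα : ∀ k, α k ∈ Set.Icc (0:ℝ) 1)
    (x : Fin m → (Fin d → ℝ))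
    (c : ℝ) (hc : c ∈ Set.Ioo (0:ℝ) 1)
    (g h : (Fin d → ℝ) → ℝ)
    (hg : ∀ y, g y ≤ avgOp d m α x g y)
    (hh : ∀ y, avgOp d m α x h y = h y)
    (hgh : ∀ y, max 0 (g y) ≤ h y)
    (q : ℕ → (Fin d → ℝ) → ℝ)
    (hq : ∀ n, q n = (bermOp d m α x c g)^[n] (fun y => max (g y) 0))
    (qsup : (Fin d → ℝ) → ℝ) (hqsup : ∀ y, qsup y = ⨆ n : ℕ, q n y) :
    (∀ y, qsup y ≤ h y) ∧ (∀ y, qsup y ≤ avgOp d m α x qsup y) := by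
  have hα₀ : ∀ k, 0 ≤ α k := fun k => (hα k).1
  have hc₀ : 0 ≤ c := hc.1.le
  have hq₀ : q 0 = fun y => max (g y) 0 := hq 0
  have hq_succ (n : ℕ) : q (n + 1) = bermOp d m α x c g (q n) := by
    rw [hq, hq, Function.iterate_succ_apply']
  have hh₀ : 0 ≤ h := fun y => (le_max_left _ _).trans (hgh y)
  have hgh' : g ≤ h := fun y => (le_max_right _ _).trans (hgh y)
  have hq_le_h (n : ℕ) : q n ≤ h := by
    rw [hq]
    refine (mapsTo_bermOp_Iic hα₀ hc₀ hc.2.le hh₀ hgh' (fun y => (hh y).le)).iterate n ?_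
    exact fun y => max_le (hgh' y) (hh₀ y)
  have hq_le_qsup (n : ℕ) : q n ≤ qsup := fun y =>
    hqsup y ▸ le_ciSup ⟨h y, Set.forall_mem_range.2 fun n => hq_le_h n y⟩ n
  have hq₀_le (y) : max (g y) 0 ≤ qsup y := by simpa only [hq₀] using hq_le_qsup 0 y
  have hqsup₀ : 0 ≤ qsup := fun y => (le_max_right _ _).trans (hq₀_le y)
  have hAqsup₀ : 0 ≤ avgOp d m α x qsup := avgOp_nonneg hα₀ hqsup₀
  have hg_le : g ≤ avgOp d m α x qsup := fun y =>
    (hg y).trans (avgOp_mono hα₀ (fun y => (le_max_left _ _).trans (hq₀_le y)) y)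
  have hq_le_Aqsup (n : ℕ) : q n ≤ avgOp d m α x qsup := by
    cases n with
    | zero => exact hq₀ ▸ fun y => max_le (hg_le y) (hAqsup₀ y)
    | succ n =>
      rw [hq_succ]
      exact (bermOp_mono hα₀ hc₀ (hq_le_qsup n)).trans
        (bermOp_le_of_avgOp_le hc₀ hc.2.le hAqsup₀ hg_le le_rfl)
  exact ⟨fun y => hqsup y ▸ ciSup_le fun n => hq_le_h n y,
    fun y => hqsup y ▸ ciSup_le fun n => hq_le_Aqsup n y⟩

/-- Theorem 2, part of: the pointwise supremum
`q(y) = ⨆ n, q_n(y)` satisfies `q ≤ h` and `A q ≥ q` pointwise, i.e. `q ∈ Q`. -/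
theorem qsup_mem_Q (d m : ℕ) (hm : 1 ≤ m)
    (α : Fin m → ℝ) (hα : ∀ k, α k ∈ Set.Icc (0:ℝ) 1) (hsum : ∑ k, α k = 1)
    (x : Fin m → (Fin d → ℝ))
    (c : ℝ) (hc : c ∈ Set.Ioo (0:ℝ) 1)
    (g h : (Fin d → ℝ) → ℝ)
    (hg : ∀ y, g y ≤ avgOp d m α x g y)
    (hh : ∀ y, avgOp d m α x h y = h y)
    (hgh : ∀ y, max 0 (g y) ≤ h y)
    (q : ℕ → (Fin d → ℝ) → ℝ)
    (hq : ∀ n, q n = (bermOp d m α x c g)^[n] (fun y => max (g y) 0))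
    (qsup : (Fin d → ℝ) → ℝ) (hqsup : ∀ y, qsup y = ⨆ n : ℕ, q n y) :
    (∀ y, qsup y ≤ h y) ∧ (∀ y, qsup y ≤ avgOp d m α x qsup y) :=
  qsup_mem_Q_general d m α hα x c hc g h hg hh hgh q hq qsup hqsup
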